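/- arXiv:1511.05397 — 5 statements merged into one kernel-verified Lean document; each statement's English description precedes it below -/
import Mathlib

section
/- Suppose d_k ≥ d_k^r for every k ∈ V_R and there exist distinct vertices i, j ∈ V_R with d_i^r < d_i and d_j^r < d_j. Then the augmented recruitment-induced subgraph is not identified by the observed data: there exist two compatible pairs (G¹_SU, Z¹_SU) and (G²_SU, Z²_SU) such that in G¹_SU the vertices i and j have a common unsampled neighbor while in G²_SU they have no common unsampled neighbor; in particular, no graph isomorphism from G¹_SU to G²_SU fixes every vertex of V_R. -/
/-!
Unused reported degree can always be filled by fresh unsampled vertices. Attaching private pendant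
leaves to a graph whose degrees are at most the reported ones yields a compatible graph. Applied to
the recruitment graph, this gives one in which every unsampled vertex is a leaf, so `i` and `j`
share no unsampled neighbor; applied after joining `i` and `j` to one new unsampled vertex, it
gives one in which they share it. An isomorphism fixing `V_R` would map a common unsampled
neighbor of `i` and `j` to another one.
-/

open Finset

namespace RDS

/-- Edge sets of finite undirected simple graphs on the ambient vertex type `ℕ`. -/
abbrev Edges := Finset (Sym2 ℕ)

instance (VR : Finset ℕ) : DecidablePred (fun e : Sym2 ℕ => ∀ v ∈ e, v ∈ VR) :=
  fun _ => decidable_of_iff _ Finset.mem_sym2_iff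

instance (VR : Finset ℕ) : DecidablePred (fun e : Sym2 ℕ => ∃ v ∈ e, v ∈ VR) :=
  fun e => decidable_of_iff (∃ v ∈ VR, v ∈ e) (by tauto)

instance (VR : Finset ℕ) : DecidablePred (fun e : Sym2 ℕ => ∃ v ∈ e, v ∉ VR) :=
  fun e => decidable_of_iff (¬ ∀ v ∈ e, v ∈ VR) (by simp)

/-- Degree of `i` in an edge set: number of edges containing `i`. -/
def degE (E : Edges) (i : ℕ) : ℕ := (E.filter (fun e => i ∈ e)).card

/-- Edge set of the undirected graph underlying the directed recruitment graph `E_R`. -/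
def uRec (ER : Finset (ℕ × ℕ)) : Edges := ER.image (fun p => s(p.1, p.2))

/-- Degree of `i` in the undirected graph underlying the recruitment graph (`d_i^r`). -/
def dRec (ER : Finset (ℕ × ℕ)) (i : ℕ) : ℕ := degE (uRec ER) i

/-- Compatibility of an augmented recruitment-induced subgraph `(V_SU, E_SU, Z_SU)`
with the observed RDS data `(G_R, d_R, Z_R)`. -/
structure Compat (VR : Finset ℕ) (ER : Finset (ℕ × ℕ)) (d : ℕ → ℕ) (ZR : ℕ → Bool)
    (VSU : Finset ℕ) (ESU : Edges) (Z : ℕ → Bool) : Prop where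
  loopless : ∀ e ∈ ESU, ¬ e.IsDiag
  vr_subset : VR ⊆ VSU
  edges_subset : ∀ e ∈ ESU, ∀ v ∈ e, v ∈ VSU
  er_subset : ∀ p ∈ ER, s(p.1, p.2) ∈ ESU
  trait_agree : ∀ i ∈ VR, Z i = ZR i
  covered : ∀ u ∈ VSU, u ∉ VR → ∃ v ∈ VR, s(u, v) ∈ ESU
  no_unsampled_edge : ∀ e ∈ ESU, ∃ v ∈ e, v ∈ VR
  degree_eq : ∀ i ∈ VR, degE ESU i = d i

/-- The `t`-th pendant leaf of the recruited vertex `k`; `Nat.pair` makes leaves of distinct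
`(k, t)` distinct, and `M` is chosen above every vertex already in use. -/
def fresh (M k t : ℕ) : ℕ := M + Nat.pair k t

lemma le_fresh (M k t : ℕ) : M ≤ fresh M k t := Nat.le_add_right _ _

lemma fresh_inj {M k t k' t' : ℕ} : fresh M k t = fresh M k' t' ↔ k = k' ∧ t = t' := by
  simp only [fresh, Nat.add_left_cancel_iff, Nat.pair_eq_pair]

def pendantEdges (VR : Finset ℕ) (M : ℕ) (δ : ℕ → ℕ) : Edges :=
  VR.biUnion fun k => (range (δ k)).image fun t => s(k, fresh M k t)

def pendantVerts (VR : Finset ℕ) (M : ℕ) (δ : ℕ → ℕ) : Finset ℕ :=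
  VR.biUnion fun k => (range (δ k)).image (fresh M k)

section Pendant

variable {VR : Finset ℕ} {M : ℕ} {δ : ℕ → ℕ}

lemma mem_pendantEdges {e : Sym2 ℕ} :
    e ∈ pendantEdges VR M δ ↔ ∃ k ∈ VR, ∃ t < δ k, s(k, fresh M k t) = e := by
  simp [pendantEdges]

lemma mem_pendantVerts {u : ℕ} :
    u ∈ pendantVerts VR M δ ↔ ∃ k ∈ VR, ∃ t < δ k, fresh M k t = u := by
  simp [pendantVerts]

lemma eq_fresh_of_mk_mem_pendantEdges {a u : ℕ} (hu : u ∉ VR)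
    (h : s(a, u) ∈ pendantEdges VR M δ) : ∃ t, u = fresh M a t := by
  obtain ⟨k, hk, t, -, he⟩ := mem_pendantEdges.mp h
  rcases Sym2.eq_iff.mp he with ⟨rfl, rfl⟩ | ⟨rfl, -⟩
  · exact ⟨t, rfl⟩
  · exact absurd hk hu

lemma degE_pendantEdges {v : ℕ} (hv : v ∈ VR) (hvM : v < M) :
    degE (pendantEdges VR M δ) v = δ v := by
  have hfilter : (pendantEdges VR M δ).filter (v ∈ ·) =
      (range (δ v)).image fun t => s(v, fresh M v t) := by
    ext e
    simp only [mem_filter, mem_pendantEdges, mem_image, mem_range]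
    constructor
    · rintro ⟨⟨k, hk, t, ht, rfl⟩, hve⟩
      rcases Sym2.mem_iff.mp hve with rfl | rfl
      · exact ⟨t, ht, rfl⟩
      · exact absurd hvM (not_lt.mpr (le_fresh M k t))
    · rintro ⟨t, ht, rfl⟩
      exact ⟨⟨v, hv, t, ht, rfl⟩, Sym2.mem_mk_left _ _⟩
  have hinj : Function.Injective fun t => s(v, fresh M v t) :=
    fun _ _ h => (fresh_inj.mp (Sym2.congr_right.mp h)).2
  rw [degE, hfilter, card_image_of_injective _ hinj, card_range]

lemma disjoint_pendantEdges {C : Edges} (hC : ∀ e ∈ C, ∀ v ∈ e, v < M) :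
    Disjoint C (pendantEdges VR M δ) := by
  rw [disjoint_right]
  intro e he heC
  obtain ⟨k, -, t, -, rfl⟩ := mem_pendantEdges.mp he
  exact absurd (hC _ heC _ (Sym2.mem_mk_right _ _)) (not_lt.mpr (le_fresh M k t))

lemma eq_of_mk_mem_union_pendantEdges {C : Edges} (hC : ∀ e ∈ C, ∀ v ∈ e, v ∈ VR)
    {i j u : ℕ} (hu : u ∉ VR) (hiu : s(i, u) ∈ C ∪ pendantEdges VR M δ)
    (hju : s(j, u) ∈ C ∪ pendantEdges VR M δ) : i = j := by
  have pendant : ∀ {a}, s(a, u) ∈ C ∪ pendantEdges VR M δ → ∃ t, u = fresh M a t := by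
    intro a h
    rcases mem_union.mp h with h | h
    · exact absurd (hC _ h _ (Sym2.mem_mk_right _ _)) hu
    · exact eq_fresh_of_mk_mem_pendantEdges hu h
  obtain ⟨t, rfl⟩ := pendant hiu
  obtain ⟨t', ht'⟩ := pendant hju
  exact (fresh_inj.mp ht').1

end Pendant

lemma degE_union_of_disjoint {A B : Edges} (h : Disjoint A B) (v : ℕ) :
    degE (A ∪ B) v = degE A v + degE B v := by
  rw [degE, filter_union, card_union_of_disjoint (disjoint_filter_filter h)]
  rfl

lemma degE_insert_of_notMem {C : Edges} {e : Sym2 ℕ} {v : ℕ} (hv : v ∉ e) :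
    degE (insert e C) v = degE C v := by
  rw [degE, filter_insert, if_neg hv, degE]

lemma degE_insert_of_mem_of_notMem {C : Edges} {e : Sym2 ℕ} {v : ℕ} (hv : v ∈ e) (he : e ∉ C) :
    degE (insert e C) v = degE C v + 1 := by
  rw [degE, filter_insert, if_pos hv, card_insert_of_notMem (fun h => he (mem_filter.mp h).1),
    degE]

/-- `Compat` without traits and with the reported degrees weakened to upper bounds; pendant
leaves complete such a graph to a compatible one (`Precompat.compat_union_pendantEdges`). -/
structure Precompat (VR : Finset ℕ) (ER : Finset (ℕ × ℕ)) (d : ℕ → ℕ)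
    (W : Finset ℕ) (C : Edges) : Prop where
  loopless : ∀ e ∈ C, ¬ e.IsDiag
  vr_subset : VR ⊆ W
  edges_subset : ∀ e ∈ C, ∀ v ∈ e, v ∈ W
  er_subset : ∀ p ∈ ER, s(p.1, p.2) ∈ C
  covered : ∀ u ∈ W, u ∉ VR → ∃ v ∈ VR, s(u, v) ∈ C
  no_unsampled_edge : ∀ e ∈ C, ∃ v ∈ e, v ∈ VR
  degree_le : ∀ i ∈ VR, degE C i ≤ d i

section Precompat

variable {VR : Finset ℕ} {ER : Finset (ℕ × ℕ)} {d : ℕ → ℕ}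

lemma precompat_uRec (hER : ∀ p ∈ ER, p.1 ∈ VR ∧ p.2 ∈ VR ∧ p.1 ≠ p.2)
    (hd : ∀ k ∈ VR, dRec ER k ≤ d k) : Precompat VR ER d VR (uRec ER) where
  loopless := by
    simp only [uRec, mem_image, forall_exists_index, and_imp]
    rintro _ p hp rfl
    exact Sym2.mk_isDiag_iff.not.mpr (hER p hp).2.2
  vr_subset := Subset.rfl
  edges_subset := by
    simp only [uRec, mem_image, forall_exists_index, and_imp]
    rintro _ p hp rfl v hv
    rcases Sym2.mem_iff.mp hv with rfl | rfl
    exacts [(hER p hp).1, (hER p hp).2.1]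
  er_subset p hp := mem_image_of_mem _ hp
  covered _ hu hu' := absurd hu hu'
  no_unsampled_edge := by
    simp only [uRec, mem_image, forall_exists_index, and_imp]
    rintro _ p hp rfl
    exact ⟨p.1, Sym2.mem_mk_left _ _, (hER p hp).1⟩
  degree_le := hd

variable {W : Finset ℕ} {C : Edges}

lemma Precompat.insert_edge (h : Precompat VR ER d W C) {v u : ℕ} (hv : v ∈ VR) (hu : u ∉ VR)
    (hvu : s(v, u) ∉ C) (hslack : degE C v < d v) :
    Precompat VR ER d (insert u W) (insert s(v, u) C) where
  loopless := by
    simp only [mem_insert, forall_eq_or_imp, Sym2.mk_isDiag_iff]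
    exact ⟨fun h => hu (h ▸ hv), h.loopless⟩
  vr_subset := h.vr_subset.trans (subset_insert _ _)
  edges_subset := by
    simp only [mem_insert, forall_eq_or_imp, Sym2.mem_iff]
    exact ⟨⟨Or.inr (h.vr_subset hv), fun _ => Or.inl⟩,
      fun e he w hw => Or.inr (h.edges_subset e he w hw)⟩
  er_subset p hp := mem_insert_of_mem (h.er_subset p hp)
  covered := by
    simp only [mem_insert, forall_eq_or_imp]
    refine ⟨fun _ => ⟨v, hv, Or.inl Sym2.eq_swap⟩, fun w hw hw' => ?_⟩
    obtain ⟨x, hx, hwx⟩ := h.covered w hw hw'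
    exact ⟨x, hx, Or.inr hwx⟩
  no_unsampled_edge := by
    simp only [mem_insert, forall_eq_or_imp]
    exact ⟨⟨v, Sym2.mem_mk_left _ _, hv⟩, h.no_unsampled_edge⟩
  degree_le w hw := by
    by_cases hwv : w = v
    · subst hwv
      rw [degE_insert_of_mem_of_notMem (Sym2.mem_mk_left _ _) hvu]
      exact hslack
    · have hwu : w ≠ u := fun h => hu (h ▸ hw)
      rw [degE_insert_of_notMem (by simp [hwv, hwu])]
      exact h.degree_le w hw

lemma Precompat.insert_common_neighbor (h : Precompat VR ER d W C) {i j u : ℕ} (hi : i ∈ VR)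
    (hj : j ∈ VR) (hij : i ≠ j) (hu : u ∉ W) (hdi : degE C i < d i) (hdj : degE C j < d j) :
    Precompat VR ER d (insert u W) (insert s(j, u) (insert s(i, u) C)) := by
  have huVR : u ∉ VR := fun h' => hu (h.vr_subset h')
  have hC : ∀ v, s(v, u) ∉ C := fun v he => hu (h.edges_subset _ he u (Sym2.mem_mk_right _ _))
  rw [← insert_eq_of_mem (mem_insert_self u W)]
  refine (h.insert_edge hi huVR (hC i) hdi).insert_edge hj huVR ?_ ?_
  · rw [mem_insert, not_or]
    exact ⟨fun he => hij (Sym2.congr_left.mp he).symm, hC j⟩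
  · rwa [degE_insert_of_notMem]
    rw [Sym2.mem_iff]
    rintro (rfl | rfl)
    exacts [hij rfl, huVR hj]

theorem Precompat.compat_union_pendantEdges (h : Precompat VR ER d W C) {M : ℕ}
    (hM : ∀ v ∈ W, v < M) (ZR : ℕ → Bool) :
    Compat VR ER d ZR (W ∪ pendantVerts VR M fun k => d k - degE C k)
      (C ∪ pendantEdges VR M fun k => d k - degE C k) ZR := by
  have hVR : ∀ k ∈ VR, k < M := fun k hk => hM k (h.vr_subset hk)
  have hfresh : ∀ k ∈ VR, ∀ t, k ≠ fresh M k t := fun k hk t =>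
    (hVR k hk).trans_le (le_fresh M k t) |>.ne
  constructor
  · simp only [mem_union, mem_pendantEdges]
    rintro e (he | ⟨k, hk, t, -, rfl⟩)
    exacts [h.loopless e he, Sym2.mk_isDiag_iff.not.mpr (hfresh k hk t)]
  · exact h.vr_subset.trans subset_union_left
  · simp only [mem_union, mem_pendantEdges]
    rintro e (he | ⟨k, hk, t, ht, rfl⟩) v hv
    · exact Or.inl (h.edges_subset e he v hv)
    · rcases Sym2.mem_iff.mp hv with rfl | rfl
      exacts [Or.inl (h.vr_subset hk), Or.inr (mem_pendantVerts.mpr ⟨k, hk, t, ht, rfl⟩)]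
  · exact fun p hp => mem_union_left _ (h.er_subset p hp)
  · exact fun _ _ => rfl
  · simp only [mem_union, mem_pendantVerts]
    rintro u (hu | ⟨k, hk, t, ht, rfl⟩) hu'
    · obtain ⟨v, hv, huv⟩ := h.covered u hu hu'
      exact ⟨v, hv, Or.inl huv⟩
    · exact ⟨k, hk, Or.inr (mem_pendantEdges.mpr ⟨k, hk, t, ht, Sym2.eq_swap⟩)⟩
  · simp only [mem_union, mem_pendantEdges]
    rintro e (he | ⟨k, hk, t, -, rfl⟩)
    exacts [h.no_unsampled_edge e he, ⟨k, Sym2.mem_mk_left _ _, hk⟩]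
  · intro v hv
    have hC : ∀ e ∈ C, ∀ w ∈ e, w < M := fun e he w hw => hM w (h.edges_subset e he w hw)
    rw [degE_union_of_disjoint (disjoint_pendantEdges hC), degE_pendantEdges hv (hVR v hv)]
    have := h.degree_le v hv
    omega

end Precompat

lemma exists_common_unsampled_of_bijOn {VR V₁ V₂ : Finset ℕ} {E₁ E₂ : Edges} {i j : ℕ}
    {φ : ℕ → ℕ} (hV₁ : VR ⊆ V₁) (hi : i ∈ VR) (hj : j ∈ VR) (hφ : Set.BijOn φ ↑V₁ ↑V₂)
    (hfix : ∀ v ∈ VR, φ v = v) (hadj : ∀ a ∈ V₁, ∀ b ∈ V₁, (s(a, b) ∈ E₁ ↔ s(φ a, φ b) ∈ E₂))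
    (h : ∃ u ∈ V₁, u ∉ VR ∧ s(i, u) ∈ E₁ ∧ s(j, u) ∈ E₁) :
    ∃ u ∈ V₂, u ∉ VR ∧ s(i, u) ∈ E₂ ∧ s(j, u) ∈ E₂ := by
  obtain ⟨u, hu, huVR, hiu, hju⟩ := h
  refine ⟨φ u, hφ.mapsTo hu, fun hφu => huVR ?_, ?_, ?_⟩
  · rwa [← hφ.injOn (hV₁ hφu) hu (hfix _ hφu)]
  · simpa only [hfix i hi] using (hadj i (hV₁ hi) u hu).mp hiu
  · simpa only [hfix j hj] using (hadj j (hV₁ hj) u hu).mp hju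

/-- If two distinct recruited vertices each have unused degree, then the
augmented recruitment-induced subgraph is not identified: there are two compatible pairs,
in one of which `i` and `j` have a common unsampled neighbor while in the other they do not;
in particular no graph isomorphism between them fixes every vertex of `V_R`. -/
theorem augmented_subgraph_not_identified
    (VR : Finset ℕ) (ER : Finset (ℕ × ℕ)) (d : ℕ → ℕ) (ZR : ℕ → Bool)
    (hER : ∀ p ∈ ER, p.1 ∈ VR ∧ p.2 ∈ VR ∧ p.1 ≠ p.2)
    (hd : ∀ k ∈ VR, dRec ER k ≤ d k)
    (i j : ℕ) (hi : i ∈ VR) (hj : j ∈ VR) (hij : i ≠ j)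
    (hdi : dRec ER i < d i) (hdj : dRec ER j < d j) :
    ∃ (VSU₁ : Finset ℕ) (ESU₁ : Edges) (Z₁ : ℕ → Bool)
      (VSU₂ : Finset ℕ) (ESU₂ : Edges) (Z₂ : ℕ → Bool),
      Compat VR ER d ZR VSU₁ ESU₁ Z₁ ∧
      Compat VR ER d ZR VSU₂ ESU₂ Z₂ ∧
      -- in the first pair, `i` and `j` have a common unsampled neighbor
      (∃ u ∈ VSU₁, u ∉ VR ∧ s(i, u) ∈ ESU₁ ∧ s(j, u) ∈ ESU₁) ∧
      -- in the second pair they have none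
      (¬ ∃ u ∈ VSU₂, u ∉ VR ∧ s(i, u) ∈ ESU₂ ∧ s(j, u) ∈ ESU₂) ∧
      -- in particular, no graph isomorphism from `G¹_SU` to `G²_SU` fixes every vertex of `V_R`
      ¬ ∃ φ : ℕ → ℕ, Set.BijOn φ ↑VSU₁ ↑VSU₂ ∧ (∀ v ∈ VR, φ v = v) ∧
          ∀ a ∈ VSU₁, ∀ b ∈ VSU₁, (s(a, b) ∈ ESU₁ ↔ s(φ a, φ b) ∈ ESU₂) := by
  obtain ⟨N, hN⟩ : ∃ N, ∀ k ∈ VR, k < N :=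
    ⟨VR.sup id + 1, fun k hk => Nat.lt_succ_of_le (le_sup (f := id) hk)⟩
  have hNVR : N ∉ VR := fun h => lt_irrefl N (hN N h)
  have hB := precompat_uRec hER hd
  have hB₁ := hB.insert_common_neighbor hi hj hij hNVR hdi hdj
  have hW : ∀ v ∈ insert N VR, v < N + 1 := by
    simp only [mem_insert, forall_eq_or_imp]
    exact ⟨N.lt_succ_self, fun v hv => (hN v hv).trans N.lt_succ_self⟩
  set C₁ := insert s(j, N) (insert s(i, N) (uRec ER))
  set V₁ := insert N VR ∪ pendantVerts VR (N + 1) fun k => d k - degE C₁ k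
  set E₁ := C₁ ∪ pendantEdges VR (N + 1) fun k => d k - degE C₁ k
  set V₂ := VR ∪ pendantVerts VR N fun k => d k - degE (uRec ER) k
  set E₂ := uRec ER ∪ pendantEdges VR N fun k => d k - degE (uRec ER) k
  have compat₁ : Compat VR ER d ZR V₁ E₁ ZR := hB₁.compat_union_pendantEdges hW ZR
  have common : ∃ u ∈ V₁, u ∉ VR ∧ s(i, u) ∈ E₁ ∧ s(j, u) ∈ E₁ :=
    ⟨N, mem_union_left _ (mem_insert_self _ _), hNVR,
      mem_union_left _ (mem_insert_of_mem (mem_insert_self _ _)),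
      mem_union_left _ (mem_insert_self _ _)⟩
  have no_common : ¬ ∃ u ∈ V₂, u ∉ VR ∧ s(i, u) ∈ E₂ ∧ s(j, u) ∈ E₂ :=
    fun ⟨u, _, hu, hiu, hju⟩ => hij (eq_of_mk_mem_union_pendantEdges hB.edges_subset hu hiu hju)
  refine ⟨V₁, E₁, ZR, V₂, E₂, ZR, compat₁, hB.compat_union_pendantEdges hN ZR, common, no_common,
    fun ⟨φ, hφ, hfix, hadj⟩ => no_common ?_⟩
  exact exists_common_unsampled_of_bijOn compat₁.vr_subset hi hj hφ hfix hadj common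

end RDS
end

section
/- Let (G¹_SU, Z¹) be a compatible pair; let i, j ∈ V_R with Z_i = 0 and Z_j = 1; and let u₁, u₂ be distinct unsampled vertices with Z¹(u₁) = 0, Z¹(u₂) = 1, {i,u₁} ∈ E¹_SU, {j,u₂} ∈ E¹_SU, {i,u₂} ∉ E¹_SU, and {j,u₁} ∉ E¹_SU. Let (G²_SU, Z²) be obtained from (G¹_SU, Z¹) by replacing the edges {i,u₁} and {j,u₂} with the edges {i,u₂} and {j,u₁}, keeping all other edges, all vertices, and all traits unchanged. Then: (a) (G²_SU, Z²) is compatible with the observed data; (b) the quantities N_P, Ā, Z̄, σ(A), and σ(Z) coincide for the two pairs; and (c) whenever σ(A) > 0 and σ(Z) > 0, h(G¹_SU, Z¹) − h(G²_SU, Z²) = 2/(N_P · σ(A) · σ(Z)) > 0. -/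
/-!
Both exchanged edges join a sampled vertex to an unsampled one, so the swap keeps every
degree in `V_R`, the number of edges and hence `Ā` and `σ(A)`, which depend on the edge set
only through its size. In the covariance numerator `∑ (A_{ij} - Ā) (1{Z_i = Z_j} - Z̄)` only
the four exchanged pairs change: the two concordant edges `{i,u₁}, {j,u₂}` are replaced by
two discordant ones, which lowers the numerator by exactly `2`.
-/

open Finset

namespace RDS

/-- The set `P` of unordered pairs `{i,j}` with `i ∈ V_R`, `j ∈ V_SU`, `i ≠ j`. -/
def pairsP (VR VSU : Finset ℕ) : Edges :=
  ((VR ×ˢ VSU).filter (fun p => p.1 ≠ p.2)).image (fun p => s(p.1, p.2))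

/-- Indicator `1{Z_i = Z_j}` of trait agreement on an unordered pair, as a real number. -/
def zInd (Z : ℕ → Bool) (e : Sym2 ℕ) : ℝ :=
  Sym2.lift ⟨fun i j => if Z i = Z j then 1 else 0, fun i j => by simp [eq_comm]⟩ e

/-- Adjacency indicator `A_{ij}` of an unordered pair. -/
def aInd (E : Edges) (e : Sym2 ℕ) : ℝ := if e ∈ E then 1 else 0

/-- `Ā = |E_SU| / N_P`. -/
noncomputable def AbarC (VR VSU : Finset ℕ) (ESU : Edges) : ℝ :=
  (ESU.card : ℝ) / ((pairsP VR VSU).card : ℝ)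

/-- `Z̄`, the mean of `1{Z_i = Z_j}` over `P`. -/
noncomputable def ZbarC (VR VSU : Finset ℕ) (Z : ℕ → Bool) : ℝ :=
  (∑ e ∈ pairsP VR VSU, zInd Z e) / ((pairsP VR VSU).card : ℝ)

/-- `σ(A)`. -/
noncomputable def sigmaAC (VR VSU : Finset ℕ) (ESU : Edges) : ℝ :=
  Real.sqrt ((∑ e ∈ pairsP VR VSU, (aInd ESU e - AbarC VR VSU ESU) ^ 2) /
    ((pairsP VR VSU).card : ℝ))

/-- `σ(Z)`. -/
noncomputable def sigmaZC (VR VSU : Finset ℕ) (Z : ℕ → Bool) : ℝ :=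
  Real.sqrt ((∑ e ∈ pairsP VR VSU, (zInd Z e - ZbarC VR VSU Z) ^ 2) /
    ((pairsP VR VSU).card : ℝ))

/-- Subgraph homophily `h(G_SU, Z_SU)` of a compatible pair. -/
noncomputable def homophilyC (VR VSU : Finset ℕ) (ESU : Edges) (Z : ℕ → Bool) : ℝ :=
  (∑ e ∈ pairsP VR VSU, (aInd ESU e - AbarC VR VSU ESU) * (zInd Z e - ZbarC VR VSU Z)) /
    (((pairsP VR VSU).card : ℝ) * sigmaAC VR VSU ESU * sigmaZC VR VSU Z)

lemma zInd_mk (Z : ℕ → Bool) (a b : ℕ) : zInd Z s(a, b) = if Z a = Z b then 1 else 0 := rfl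

lemma mk_ne_mk_of_ne_of_ne {α : Type*} {x y u w : α} (hxy : x ≠ y) (hxw : x ≠ w) :
    s(x, u) ≠ s(y, w) := by
  rw [Ne, Sym2.eq_iff]
  rintro (⟨h, -⟩ | ⟨h, -⟩)
  exacts [hxy h, hxw h]

def exchange {α : Type*} [DecidableEq α] (s : Finset α) (a b a' b' : α) : Finset α :=
  insert a' (insert b' ((s.erase a).erase b))

section Exchange

variable {α : Type*} [DecidableEq α] {s : Finset α} {a b a' b' x : α}

lemma mem_exchange_left : a' ∈ exchange s a b a' b' := mem_insert_self _ _

lemma mem_exchange_right : b' ∈ exchange s a b a' b' :=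
  mem_insert_of_mem (mem_insert_self _ _)

lemma mem_exchange_of_mem (hx : x ∈ s) (hxa : x ≠ a) (hxb : x ≠ b) :
    x ∈ exchange s a b a' b' :=
  mem_insert_of_mem (mem_insert_of_mem (mem_erase.mpr ⟨hxb, mem_erase.mpr ⟨hxa, hx⟩⟩))

lemma forall_mem_exchange {p : α → Prop} (hs : ∀ x ∈ s, p x) (ha' : p a') (hb' : p b') :
    ∀ x ∈ exchange s a b a' b', p x := by
  simp only [exchange, forall_mem_insert]
  exact ⟨ha', hb', fun x hx => hs x (mem_of_mem_erase (mem_of_mem_erase hx))⟩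

lemma sum_exchange_add_add {M : Type*} [AddCommMonoid M] (f : α → M) (ha : a ∈ s) (hb : b ∈ s)
    (hab : a ≠ b) (ha' : a' ∉ s) (hb' : b' ∉ s) (hab' : a' ≠ b') :
    ∑ x ∈ exchange s a b a' b', f x + (f a + f b) = ∑ x ∈ s, f x + (f a' + f b') := by
  have hb_erase : b ∈ s.erase a := mem_erase.mpr ⟨hab.symm, hb⟩
  have hb'_notMem : b' ∉ (s.erase a).erase b :=
    fun h => hb' (mem_of_mem_erase (mem_of_mem_erase h))
  have ha'_notMem : a' ∉ insert b' ((s.erase a).erase b) := by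
    rw [mem_insert, not_or]
    exact ⟨hab', fun h => ha' (mem_of_mem_erase (mem_of_mem_erase h))⟩
  rw [exchange, sum_insert ha'_notMem, sum_insert hb'_notMem, ← add_sum_erase s f ha,
    ← add_sum_erase _ f hb_erase]
  abel

lemma card_exchange (ha : a ∈ s) (hb : b ∈ s) (hab : a ≠ b) (ha' : a' ∉ s) (hb' : b' ∉ s)
    (hab' : a' ≠ b') : (exchange s a b a' b').card = s.card := by
  have h := sum_exchange_add_add (fun _ => 1) ha hb hab ha' hb' hab'
  simp only [sum_const, smul_eq_mul, mul_one] at h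
  omega

end Exchange

lemma degE_exchange {v : ℕ} {E : Edges} {a b a' b' : Sym2 ℕ} (ha : a ∈ E) (hb : b ∈ E)
    (hab : a ≠ b) (ha' : a' ∉ E) (hb' : b' ∉ E) (hab' : a' ≠ b')
    (hva : v ∈ a ↔ v ∈ a') (hvb : v ∈ b ↔ v ∈ b') :
    degE (exchange E a b a' b') v = degE E v := by
  have h := sum_exchange_add_add (fun e => if v ∈ e then 1 else 0) ha hb hab ha' hb' hab'
  simp only [hva, hvb] at h
  simp only [degE, card_filter]
  omega

lemma mem_pairsP {VR VSU : Finset ℕ} {a b : ℕ} (ha : a ∈ VR) (hb : b ∈ VSU) (hab : a ≠ b) :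
    s(a, b) ∈ pairsP VR VSU :=
  mem_image.mpr ⟨(a, b), mem_filter.mpr ⟨mem_product.mpr ⟨ha, hb⟩, hab⟩, rfl⟩

namespace Compat

variable {VR : Finset ℕ} {ER : Finset (ℕ × ℕ)} {d : ℕ → ℕ} {ZR : ℕ → Bool} {VSU : Finset ℕ}
  {ESU : Edges} {Z : ℕ → Bool}

lemma subset_pairsP (hc : Compat VR ER d ZR VSU ESU Z) : ESU ⊆ pairsP VR VSU := by
  intro e he
  induction e using Sym2.ind with
  | _ a b =>
    obtain ⟨v, hv, hvR⟩ := hc.no_unsampled_edge _ he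
    have ha : a ∈ VSU := hc.edges_subset _ he a (Sym2.mem_mk_left a b)
    have hb : b ∈ VSU := hc.edges_subset _ he b (Sym2.mem_mk_right a b)
    have hab : a ≠ b := fun h => hc.loopless _ he (Sym2.mk_isDiag_iff.mpr h)
    rcases Sym2.mem_iff.mp hv with rfl | rfl
    · exact mem_pairsP hvR hb hab
    · rw [Sym2.eq_swap]
      exact mem_pairsP hvR ha hab.symm

lemma exchange (hc : Compat VR ER d ZR VSU ESU Z) (hER : ∀ p ∈ ER, p.1 ∈ VR ∧ p.2 ∈ VR)
    {i j u₁ u₂ : ℕ} (hi : i ∈ VR) (hj : j ∈ VR) (hij : i ≠ j)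
    (hu₁ : u₁ ∈ VSU) (hu₁' : u₁ ∉ VR) (hu₂ : u₂ ∈ VSU) (hu₂' : u₂ ∉ VR)
    (hiu₁ : s(i, u₁) ∈ ESU) (hju₂ : s(j, u₂) ∈ ESU) (hiu₂ : s(i, u₂) ∉ ESU)
    (hju₁ : s(j, u₁) ∉ ESU) :
    Compat VR ER d ZR VSU (RDS.exchange ESU s(i, u₁) s(j, u₂) s(i, u₂) s(j, u₁)) Z := by
  have hne {x u : ℕ} (hx : x ∈ VR) (hu : u ∉ VR) : x ≠ u := ne_of_mem_of_not_mem hx hu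
  have hab : s(i, u₁) ≠ s(j, u₂) := mk_ne_mk_of_ne_of_ne hij (hne hi hu₂')
  have hab' : s(i, u₂) ≠ s(j, u₁) := mk_ne_mk_of_ne_of_ne hij (hne hi hu₁')
  have hkeep {e : Sym2 ℕ} (he : e ∈ ESU) (h₁ : u₁ ∉ e) (h₂ : u₂ ∉ e) :
      e ∈ RDS.exchange ESU s(i, u₁) s(j, u₂) s(i, u₂) s(j, u₁) :=
    mem_exchange_of_mem he (fun h => h₁ (h ▸ Sym2.mem_mk_right i u₁))
      (fun h => h₂ (h ▸ Sym2.mem_mk_right j u₂))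
  refine ⟨forall_mem_exchange hc.loopless ?_ ?_, hc.vr_subset,
    forall_mem_exchange hc.edges_subset ?_ ?_, fun p hp => ?_, hc.trait_agree, ?_,
    forall_mem_exchange hc.no_unsampled_edge ⟨i, Sym2.mem_mk_left i u₂, hi⟩
      ⟨j, Sym2.mem_mk_left j u₁, hj⟩, fun v hv => ?_⟩
  · exact Sym2.mk_isDiag_iff.not.mpr (hne hi hu₂')
  · exact Sym2.mk_isDiag_iff.not.mpr (hne hj hu₁')
  · simp only [Sym2.mem_iff, forall_eq_or_imp, forall_eq]
    exact ⟨hc.vr_subset hi, hu₂⟩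
  · simp only [Sym2.mem_iff, forall_eq_or_imp, forall_eq]
    exact ⟨hc.vr_subset hj, hu₁⟩
  · obtain ⟨hp₁, hp₂⟩ := hER p hp
    have hout {u : ℕ} (hu : u ∉ VR) : u ∉ s(p.1, p.2) := by
      rw [Sym2.mem_iff, not_or]
      exact ⟨(hne hp₁ hu).symm, (hne hp₂ hu).symm⟩
    exact hkeep (hc.er_subset p hp) (hout hu₁') (hout hu₂')
  · intro u hu hu'
    by_cases h₁ : u = u₁
    · exact ⟨j, hj, by rw [h₁, Sym2.eq_swap (a := u₁)]; exact mem_exchange_right⟩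
    by_cases h₂ : u = u₂
    · exact ⟨i, hi, by rw [h₂, Sym2.eq_swap (a := u₂)]; exact mem_exchange_left⟩
    obtain ⟨v, hv, huv⟩ := hc.covered u hu hu'
    refine ⟨v, hv, hkeep huv ?_ ?_⟩ <;> rw [Sym2.mem_iff, not_or]
    exacts [⟨Ne.symm h₁, (hne hv hu₁').symm⟩, ⟨Ne.symm h₂, (hne hv hu₂').symm⟩]
  · rw [degE_exchange hiu₁ hju₂ hab hiu₂ hju₁ hab' (by simp [hne hv hu₁', hne hv hu₂'])
      (by simp [hne hv hu₁', hne hv hu₂'])]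
    exact hc.degree_eq v hv

end Compat

lemma sum_aInd_sub_mul {P E : Edges} (hE : E ⊆ P) (c : ℝ) (w : Sym2 ℕ → ℝ) :
    ∑ e ∈ P, (aInd E e - c) * w e = ∑ e ∈ E, w e - c * ∑ e ∈ P, w e := by
  simp only [sub_mul, sum_sub_distrib, aInd, ite_mul, one_mul, zero_mul, sum_ite_mem,
    inter_eq_right.mpr hE, mul_sum]

lemma sum_sq_aInd_sub {P E : Edges} (hE : E ⊆ P) (c : ℝ) :
    ∑ e ∈ P, (aInd E e - c) ^ 2 = E.card * (1 - c) ^ 2 + (P.card - E.card) * c ^ 2 := by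
  have hin : ∀ e ∈ E, (aInd E e - c) ^ 2 = (1 - c) ^ 2 := fun e he => by rw [aInd, if_pos he]
  have hout : ∀ e ∈ P \ E, (aInd E e - c) ^ 2 = c ^ 2 := fun e he => by
    rw [aInd, if_neg (mem_sdiff.mp he).2, zero_sub, neg_sq]
  rw [← sum_sdiff hE, sum_congr rfl hin, sum_congr rfl hout, sum_const, sum_const,
    card_sdiff_of_subset hE, nsmul_eq_mul, nsmul_eq_mul, Nat.cast_sub (card_le_card hE)]
  ring

section CardInvariance

variable {VR VSU : Finset ℕ} {E E' : Edges}

lemma AbarC_eq_of_card_eq (h : E'.card = E.card) : AbarC VR VSU E' = AbarC VR VSU E := by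
  rw [AbarC, AbarC, h]

lemma sigmaAC_eq_of_card_eq (hE : E ⊆ pairsP VR VSU) (hE' : E' ⊆ pairsP VR VSU)
    (h : E'.card = E.card) : sigmaAC VR VSU E' = sigmaAC VR VSU E := by
  rw [sigmaAC, sigmaAC, AbarC_eq_of_card_eq h, sum_sq_aInd_sub hE', sum_sq_aInd_sub hE, h]

lemma homophilyC_sub_homophilyC_of_card_eq (Z : ℕ → Bool) (hE : E ⊆ pairsP VR VSU)
    (hE' : E' ⊆ pairsP VR VSU) (h : E'.card = E.card) :
    homophilyC VR VSU E Z - homophilyC VR VSU E' Z =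
      (∑ e ∈ E, (zInd Z e - ZbarC VR VSU Z) - ∑ e ∈ E', (zInd Z e - ZbarC VR VSU Z)) /
        ((pairsP VR VSU).card * sigmaAC VR VSU E * sigmaZC VR VSU Z) := by
  rw [homophilyC, homophilyC, sigmaAC_eq_of_card_eq hE hE' h, AbarC_eq_of_card_eq h,
    div_sub_div_same, sum_aInd_sub_mul hE, sum_aInd_sub_mul hE']
  ring

end CardInvariance

theorem homophily_swap_difference_general
    (VR : Finset ℕ) (ER : Finset (ℕ × ℕ)) (d : ℕ → ℕ) (ZR : ℕ → Bool)
    (VSU : Finset ℕ) (ESU : Edges) (Z : ℕ → Bool)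
    (hER : ∀ p ∈ ER, p.1 ∈ VR ∧ p.2 ∈ VR)
    (hc : Compat VR ER d ZR VSU ESU Z)
    (i j u₁ u₂ : ℕ)
    (hi : i ∈ VR) (hj : j ∈ VR)
    (hZi : Z i = false) (hZj : Z j = true)
    (hu₁ : u₁ ∈ VSU) (hu₁' : u₁ ∉ VR)
    (hu₂ : u₂ ∈ VSU) (hu₂' : u₂ ∉ VR)
    (hZu₁ : Z u₁ = false) (hZu₂ : Z u₂ = true)
    (hiu₁ : s(i, u₁) ∈ ESU) (hju₂ : s(j, u₂) ∈ ESU)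
    (hiu₂ : s(i, u₂) ∉ ESU) (hju₁ : s(j, u₁) ∉ ESU)
    -- the modified edge set: replace {i,u₁} and {j,u₂} by {i,u₂} and {j,u₁}
    (ESU₂ : Edges)
    (hESU₂ : ESU₂ = insert s(i, u₂) (insert s(j, u₁) ((ESU.erase s(i, u₁)).erase s(j, u₂)))) :
    -- (a) the modified pair is compatible with the observed data
    Compat VR ER d ZR VSU ESU₂ Z ∧
    -- (b) the summary quantities of the two pairs coincide
    -- (`N_P`, `Z̄` and `σ(Z)` coincide since the two pairs share `V_R`, `V_SU` and `Z`)
    ESU₂.card = ESU.card ∧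
    AbarC VR VSU ESU₂ = AbarC VR VSU ESU ∧
    sigmaAC VR VSU ESU₂ = sigmaAC VR VSU ESU ∧
    -- (c) whenever σ(A) > 0 and σ(Z) > 0, h₁ − h₂ = 2/(N_P·σ(A)·σ(Z)) > 0
    (0 < sigmaAC VR VSU ESU → 0 < sigmaZC VR VSU Z →
      homophilyC VR VSU ESU Z - homophilyC VR VSU ESU₂ Z =
        2 / (((pairsP VR VSU).card : ℝ) * sigmaAC VR VSU ESU * sigmaZC VR VSU Z) ∧
      0 < homophilyC VR VSU ESU Z - homophilyC VR VSU ESU₂ Z) := by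
  obtain rfl : ESU₂ = exchange ESU s(i, u₁) s(j, u₂) s(i, u₂) s(j, u₁) := hESU₂
  have hij : i ≠ j := fun h => by simp [h, hZj] at hZi
  have hab : s(i, u₁) ≠ s(j, u₂) := mk_ne_mk_of_ne_of_ne hij (ne_of_mem_of_not_mem hi hu₂')
  have hab' : s(i, u₂) ≠ s(j, u₁) := mk_ne_mk_of_ne_of_ne hij (ne_of_mem_of_not_mem hi hu₁')
  have hc₂ := hc.exchange hER hi hj hij hu₁ hu₁' hu₂ hu₂' hiu₁ hju₂ hiu₂ hju₁
  have hcard := card_exchange hiu₁ hju₂ hab hiu₂ hju₁ hab'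
  have hsigmaA := sigmaAC_eq_of_card_eq hc.subset_pairsP hc₂.subset_pairsP hcard
  refine ⟨hc₂, hcard, AbarC_eq_of_card_eq hcard, hsigmaA, fun hσA hσZ => ?_⟩
  set w : Sym2 ℕ → ℝ := fun e => zInd Z e - ZbarC VR VSU Z
  have hnum : ∑ e ∈ ESU, w e -
      ∑ e ∈ exchange ESU s(i, u₁) s(j, u₂) s(i, u₂) s(j, u₁), w e = 2 := by
    have hsum := sum_exchange_add_add w hiu₁ hju₂ hab hiu₂ hju₁ hab'
    have hw : w s(i, u₁) + w s(j, u₂) = w s(i, u₂) + w s(j, u₁) + 2 := by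
      norm_num [w, zInd_mk, hZi, hZj, hZu₁, hZu₂]
      ring
    linear_combination -hsum + hw
  have hN : 0 < ((pairsP VR VSU).card : ℝ) :=
    Nat.cast_pos.mpr (card_pos.mpr ⟨_, hc.subset_pairsP hiu₁⟩)
  rw [homophilyC_sub_homophilyC_of_card_eq Z hc.subset_pairsP hc₂.subset_pairsP hcard, hnum]
  exact ⟨rfl, by positivity⟩

/-- Swapping the pendant edges `{i,u₁}, {j,u₂}` for `{i,u₂}, {j,u₁}`
(where `Z i = Z u₁ = 0` and `Z j = Z u₂ = 1`) yields another compatible pair which leaves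
`N_P`, `Ā`, `Z̄`, `σ(A)`, `σ(Z)` unchanged and decreases the homophily by exactly
`2 / (N_P · σ(A) · σ(Z)) > 0`. -/
theorem homophily_swap_difference
    (VR : Finset ℕ) (ER : Finset (ℕ × ℕ)) (d : ℕ → ℕ) (ZR : ℕ → Bool)
    (VSU : Finset ℕ) (ESU : Edges) (Z : ℕ → Bool)
    (hER : ∀ p ∈ ER, p.1 ∈ VR ∧ p.2 ∈ VR)
    (hc : Compat VR ER d ZR VSU ESU Z)
    (i j u₁ u₂ : ℕ)
    (hi : i ∈ VR) (hj : j ∈ VR)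
    (hZi : Z i = false) (hZj : Z j = true)
    (hu₁ : u₁ ∈ VSU) (hu₁' : u₁ ∉ VR)
    (hu₂ : u₂ ∈ VSU) (hu₂' : u₂ ∉ VR)
    (huu : u₁ ≠ u₂)
    (hZu₁ : Z u₁ = false) (hZu₂ : Z u₂ = true)
    (hiu₁ : s(i, u₁) ∈ ESU) (hju₂ : s(j, u₂) ∈ ESU)
    (hiu₂ : s(i, u₂) ∉ ESU) (hju₁ : s(j, u₁) ∉ ESU)
    -- the modified edge set: replace {i,u₁} and {j,u₂} by {i,u₂} and {j,u₁}
    (ESU₂ : Edges)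
    (hESU₂ : ESU₂ = insert s(i, u₂) (insert s(j, u₁) ((ESU.erase s(i, u₁)).erase s(j, u₂)))) :
    -- (a) the modified pair is compatible with the observed data
    Compat VR ER d ZR VSU ESU₂ Z ∧
    -- (b) the summary quantities of the two pairs coincide
    -- (`N_P`, `Z̄` and `σ(Z)` coincide since the two pairs share `V_R`, `V_SU` and `Z`)
    ESU₂.card = ESU.card ∧
    AbarC VR VSU ESU₂ = AbarC VR VSU ESU ∧
    sigmaAC VR VSU ESU₂ = sigmaAC VR VSU ESU ∧
    -- (c) whenever σ(A) > 0 and σ(Z) > 0, h₁ − h₂ = 2/(N_P·σ(A)·σ(Z)) > 0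
    (0 < sigmaAC VR VSU ESU → 0 < sigmaZC VR VSU Z →
      homophilyC VR VSU ESU Z - homophilyC VR VSU ESU₂ Z =
        2 / (((pairsP VR VSU).card : ℝ) * sigmaAC VR VSU ESU * sigmaZC VR VSU Z) ∧
      0 < homophilyC VR VSU ESU Z - homophilyC VR VSU ESU₂ Z) :=
  homophily_swap_difference_general VR ER d ZR VSU ESU Z hER hc i j u₁ u₂ hi hj hZi hZj hu₁ hu₁' hu₂
    hu₂' hZu₁ hZu₂ hiu₁ hju₂ hiu₂ hju₁ ESU₂ hESU₂

end RDS
end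

section
/- Let (G¹_SU, Z¹) be a compatible pair; let i ∈ V_R with Z_i = 1 be a vertex that recruited at least one other vertex, and let u be an unsampled vertex with Z¹(u) = 1 whose only neighbor in V_R is i. Let (G²_SU, Z²) be identical to (G¹_SU, Z¹) except that Z²(u) = 0. Then (G²_SU, Z²) is compatible with the observed data, and p(G²_SU, Z²) − p(G¹_SU, Z¹) = (1/(n−|M|)) · ∑_{j : r_j = i} 1/|S_i(t_j)| > 0, where the sum ranges over the non-seed vertices j recruited by i; in particular the two compatible pairs yield different values of the subgraph preferential recruitment. -/
open Finset

namespace RDS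

/-- `S_i(t_j)`: susceptible neighbors of `i` (within the vertex set `Vfin`, w.r.t. the
edge set `E`) just before the recruitment of `j`: neighbors outside `V_R` together with
non-seed neighbors in `V_R` whose recruitment label is `≥ j`. -/
def Ssusc (Vfin VR M : Finset ℕ) (E : Edges) (i j : ℕ) : Finset ℕ :=
  Vfin.filter (fun k => s(i, k) ∈ E ∧ (k ∉ VR ∨ (k ∈ VR ∧ k ∉ M ∧ j ≤ k)))

/-- `same(i, S)`: the number of elements of `S` sharing the trait of `i`. -/
def same (Z : ℕ → Bool) (i : ℕ) (S : Finset ℕ) : ℕ := (S.filter (fun k => Z k = Z i)).card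

/-- Subgraph preferential recruitment
`p = (1/(n−|M|)) ∑_{j ∈ V_R \ M} (Y_j − same(r_j, S_{r_j}(t_j)) / |S_{r_j}(t_j)|)`. -/
noncomputable def prefRec (Vfin VR M : Finset ℕ) (E : Edges) (Z : ℕ → Bool) (r : ℕ → ℕ) : ℝ :=
  (∑ j ∈ VR \ M, ((if Z j = Z (r j) then (1 : ℝ) else 0)
      - (same Z (r j) (Ssusc Vfin VR M E (r j) j) : ℝ) / ((Ssusc Vfin VR M E (r j) j).card : ℝ)))
    / (((VR \ M).card : ℝ))

/-!
Flipping the trait of the unsampled vertex `u` leaves every trait on `V_R` unchanged, hence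
compatibility and every `Y_j`. It only matters inside the sets `S_{r_j}(t_j)`, and `u` lies in
such a set exactly when `r_j = i`, since `i` is its only recruited neighbour. There `u` stops
sharing the trait of `i`, so `same` drops by one and the `j`-th summand grows by `1/|S_i(t_j)|`;
at least one such `j` exists because `i` recruited someone.
-/

noncomputable def prefRecTerm (Vfin VR M : Finset ℕ) (E : Edges) (Z : ℕ → Bool) (r : ℕ → ℕ)
    (j : ℕ) : ℝ :=
  (if Z j = Z (r j) then (1 : ℝ) else 0)
    - (same Z (r j) (Ssusc Vfin VR M E (r j) j) : ℝ) / ((Ssusc Vfin VR M E (r j) j).card : ℝ)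

theorem prefRec_eq_sum_prefRecTerm (Vfin VR M : Finset ℕ) (E : Edges) (Z : ℕ → Bool)
    (r : ℕ → ℕ) :
    prefRec Vfin VR M E Z r
      = (∑ j ∈ VR \ M, prefRecTerm Vfin VR M E Z r j) / (((VR \ M).card : ℝ)) :=
  rfl

theorem Compat.update_of_not_mem {VR : Finset ℕ} {ER : Finset (ℕ × ℕ)} {d : ℕ → ℕ}
    {ZR : ℕ → Bool} {VSU : Finset ℕ} {ESU : Edges} {Z : ℕ → Bool}
    (hc : Compat VR ER d ZR VSU ESU Z) {u : ℕ} (hu : u ∉ VR) (b : Bool) :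
    Compat VR ER d ZR VSU ESU (Function.update Z u b) :=
  { hc with
    trait_agree := fun v hv => by
      rw [Function.update_of_ne (ne_of_mem_of_not_mem hv hu)]
      exact hc.trait_agree v hv }

section Same

variable {Z : ℕ → Bool} {i u : ℕ} {S : Finset ℕ}

theorem same_update_of_not_mem (hiu : i ≠ u) (hu : u ∉ S) (b : Bool) :
    same (Function.update Z u b) i S = same Z i S := by
  unfold same
  refine congrArg card (filter_congr fun x hx => ?_)
  rw [Function.update_of_ne (ne_of_mem_of_not_mem hx hu), Function.update_of_ne hiu]

theorem same_update_add_one {b : Bool} (hiu : i ≠ u) (hu : u ∈ S) (hZu : Z u = Z i)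
    (hb : b ≠ Z i) :
    same (Function.update Z u b) i S + 1 = same Z i S := by
  have hfilter : S.filter (fun x => Function.update Z u b x = Function.update Z u b i)
      = (S.filter (fun x => Z x = Z i)).erase u := by
    ext x
    rcases eq_or_ne x u with rfl | hxu
    · simp [Function.update_of_ne hiu, hb]
    · simp [Function.update_of_ne hiu, hxu]
  unfold same
  rw [hfilter, card_erase_add_one (mem_filter.mpr ⟨hu, hZu⟩)]

end Same

section Flip

variable {Vfin VR M : Finset ℕ} {E : Edges} {Z : ℕ → Bool} {r : ℕ → ℕ} {i u j : ℕ}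

theorem mem_Ssusc_of_not_mem (huV : u ∈ Vfin) (hadj : s(i, u) ∈ E) (hu : u ∉ VR) (j : ℕ) :
    u ∈ Ssusc Vfin VR M E i j :=
  mem_filter.mpr ⟨huV, hadj, Or.inl hu⟩

theorem prefRecTerm_update_of_not_mem_Ssusc (hj : j ≠ u) (hrj : r j ≠ u)
    (hu : u ∉ Ssusc Vfin VR M E (r j) j) (b : Bool) :
    prefRecTerm Vfin VR M E (Function.update Z u b) r j = prefRecTerm Vfin VR M E Z r j := by
  unfold prefRecTerm
  rw [same_update_of_not_mem hrj hu, Function.update_of_ne hj, Function.update_of_ne hrj]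

theorem prefRecTerm_update_sub {b : Bool} (hj : j ≠ u) (hrj : r j ≠ u)
    (hu : u ∈ Ssusc Vfin VR M E (r j) j) (hZu : Z u = Z (r j)) (hb : b ≠ Z (r j)) :
    prefRecTerm Vfin VR M E (Function.update Z u b) r j - prefRecTerm Vfin VR M E Z r j
      = 1 / ((Ssusc Vfin VR M E (r j) j).card : ℝ) := by
  have hsame : (same Z (r j) (Ssusc Vfin VR M E (r j) j) : ℝ)
      = same (Function.update Z u b) (r j) (Ssusc Vfin VR M E (r j) j) + 1 := by
    exact_mod_cast (same_update_add_one hrj hu hZu hb).symm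
  unfold prefRecTerm
  rw [hsame, Function.update_of_ne hj, Function.update_of_ne hrj]
  ring

theorem prefRec_update_sub {b : Bool} (hu : u ∉ VR) (hr : ∀ j ∈ VR \ M, r j ∈ VR)
    (huV : u ∈ Vfin) (hadj : s(i, u) ∈ E) (honly : ∀ v ∈ VR, v ≠ i → s(v, u) ∉ E)
    (hZu : Z u = Z i) (hb : b ≠ Z i) :
    prefRec Vfin VR M E (Function.update Z u b) r - prefRec Vfin VR M E Z r
      = (∑ j ∈ (VR \ M).filter (fun j => r j = i), (1 : ℝ) / ((Ssusc Vfin VR M E i j).card : ℝ))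
        / (((VR \ M).card : ℝ)) := by
  rw [prefRec_eq_sum_prefRecTerm, prefRec_eq_sum_prefRecTerm, div_sub_div_same,
    ← sum_sub_distrib, sum_filter]
  refine congrArg (· / _) (sum_congr rfl fun j hj => ?_)
  have hju : j ≠ u := ne_of_mem_of_not_mem (mem_sdiff.mp hj).1 hu
  have hrju : r j ≠ u := ne_of_mem_of_not_mem (hr j hj) hu
  by_cases hri : r j = i
  · subst hri
    rw [if_pos rfl, prefRecTerm_update_sub hju hrju (mem_Ssusc_of_not_mem huV hadj hu j) hZu hb]
  · have huS : u ∉ Ssusc Vfin VR M E (r j) j :=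
      fun h => honly (r j) (hr j hj) hri (mem_filter.mp h).2.1
    rw [if_neg hri, prefRecTerm_update_of_not_mem_Ssusc hju hrju huS, sub_self]

theorem sum_filter_one_div_card_Ssusc_pos {k : ℕ} (hk : k ∈ VR \ M) (hrk : r k = i)
    (huS : u ∈ Ssusc Vfin VR M E i k) :
    0 < (∑ j ∈ (VR \ M).filter (fun j => r j = i), (1 : ℝ) / ((Ssusc Vfin VR M E i j).card : ℝ))
        / (((VR \ M).card : ℝ)) := by
  have hcard : (0 : ℝ) < (Ssusc Vfin VR M E i k).card := by
    exact_mod_cast card_pos.mpr ⟨u, huS⟩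
  refine div_pos (sum_pos' (fun j _ => by positivity) ⟨k, mem_filter.mpr ⟨hk, hrk⟩, by positivity⟩)
    (by exact_mod_cast card_pos.mpr ⟨k, hk⟩)

end Flip

theorem prefrec_flip_difference_general
    (VR M : Finset ℕ) (ER : Finset (ℕ × ℕ)) (d : ℕ → ℕ) (ZR : ℕ → Bool)
    (VSU : Finset ℕ) (ESU : Edges) (Z : ℕ → Bool) (r : ℕ → ℕ)
    (hER : ∀ p ∈ ER, p.1 ∈ VR ∧ p.2 ∈ VR ∧ p.1 ≠ p.2)
    -- seeds are not recruited
    (hseed : ∀ j ∈ M, ∀ a, (a, j) ∉ ER)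
    -- every non-seed `j` has the unique recruiter `r j`
    (hrec : ∀ j ∈ VR \ M, (r j, j) ∈ ER ∧ ∀ a, (a, j) ∈ ER → a = r j)
    (hc : Compat VR ER d ZR VSU ESU Z)
    (i u k : ℕ)
    (hZi : Z i = true)
    -- `i` recruited at least one other vertex
    (hik : (i, k) ∈ ER)
    (hu : u ∈ VSU) (hu' : u ∉ VR) (hZu : Z u = true)
    -- the only neighbor of `u` in `V_R` is `i`
    (hadj : s(i, u) ∈ ESU) (honly : ∀ v ∈ VR, v ≠ i → s(v, u) ∉ ESU)
    -- the modified traits: identical except that `Z₂ u = 0`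
    (Z₂ : ℕ → Bool) (hZ₂ : Z₂ = Function.update Z u false) :
    Compat VR ER d ZR VSU ESU Z₂ ∧
    prefRec VSU VR M ESU Z₂ r - prefRec VSU VR M ESU Z r =
      (∑ j ∈ (VR \ M).filter (fun j => r j = i), (1 : ℝ) / ((Ssusc VSU VR M ESU i j).card : ℝ))
        / (((VR \ M).card : ℝ)) ∧
    0 < prefRec VSU VR M ESU Z₂ r - prefRec VSU VR M ESU Z r := by
  subst hZ₂
  have hk : k ∈ VR \ M := mem_sdiff.mpr ⟨(hER _ hik).2.1, fun hkM => hseed k hkM i hik⟩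
  have hrk : r k = i := ((hrec k hk).2 i hik).symm
  have hr : ∀ j ∈ VR \ M, r j ∈ VR := fun j hj => (hER _ (hrec j hj).1).1
  have hdiff := prefRec_update_sub (M := M) (r := r) (b := false) hu' hr hu hadj honly
    (hZu.trans hZi.symm) (by simp [hZi])
  refine ⟨hc.update_of_not_mem hu' false, hdiff, hdiff ▸ ?_⟩
  exact sum_filter_one_div_card_Ssusc_pos hk hrk (mem_Ssusc_of_not_mem hu hadj hu' k)

/-- Flipping the trait of an unsampled vertex `u` (with `Z u = 1`)
whose only recruited neighbor is `i` (with `Z i = 1`, and `i` recruited someone) yields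
another compatible pair, and
`p₂ − p₁ = (1/(n−|M|)) ∑_{j : r_j = i} 1/|S_i(t_j)| > 0`;
in particular the two compatible pairs yield different preferential recruitment values. -/
theorem prefrec_flip_difference
    (VR M : Finset ℕ) (ER : Finset (ℕ × ℕ)) (d : ℕ → ℕ) (ZR : ℕ → Bool)
    (VSU : Finset ℕ) (ESU : Edges) (Z : ℕ → Bool) (r : ℕ → ℕ)
    (hM : M ⊆ VR)
    (hER : ∀ p ∈ ER, p.1 ∈ VR ∧ p.2 ∈ VR ∧ p.1 ≠ p.2)
    -- seeds are not recruited
    (hseed : ∀ j ∈ M, ∀ a, (a, j) ∉ ER)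
    -- every non-seed `j` has the unique recruiter `r j`
    (hrec : ∀ j ∈ VR \ M, (r j, j) ∈ ER ∧ ∀ a, (a, j) ∈ ER → a = r j)
    (hc : Compat VR ER d ZR VSU ESU Z)
    (i u k : ℕ)
    (hi : i ∈ VR) (hZi : Z i = true)
    -- `i` recruited at least one other vertex
    (hik : (i, k) ∈ ER)
    (hu : u ∈ VSU) (hu' : u ∉ VR) (hZu : Z u = true)
    -- the only neighbor of `u` in `V_R` is `i`
    (hadj : s(i, u) ∈ ESU) (honly : ∀ v ∈ VR, v ≠ i → s(v, u) ∉ ESU)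
    -- the modified traits: identical except that `Z₂ u = 0`
    (Z₂ : ℕ → Bool) (hZ₂ : Z₂ = Function.update Z u false) :
    Compat VR ER d ZR VSU ESU Z₂ ∧
    prefRec VSU VR M ESU Z₂ r - prefRec VSU VR M ESU Z r =
      (∑ j ∈ (VR \ M).filter (fun j => r j = i), (1 : ℝ) / ((Ssusc VSU VR M ESU i j).card : ℝ))
        / (((VR \ M).card : ℝ)) ∧
    0 < prefRec VSU VR M ESU Z₂ r - prefRec VSU VR M ESU Z r :=
  prefrec_flip_difference_general VR M ER d ZR VSU ESU Z r hER hseed hrec hc i u k hZi hik hu hu'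
    hZu hadj honly Z₂ hZ₂

end RDS
end

section
/- Suppose d_i = d_i^r for every i ∈ V_R. Then the compatible pair is unique: every pair (G_SU, Z_SU) compatible with the observed data satisfies V_SU = V_R, E_SU equals the edge set of the undirected graph underlying G_R, and Z_SU = Z_R. Consequently any function of compatible pairs — in particular the subgraph homophily h and the subgraph preferential recruitment p, when defined — takes the same value on all compatible pairs, i.e. is point identified. -/
open Finset

namespace RDS

/-! Compatibility forces `uRec ER ⊆ E_SU`. When reported degrees equal recruitment degrees,
the two edge sets have the same edges at every sampled vertex, and since every edge of `E_SU`
meets `V_R` they coincide. An unsampled vertex would then need an edge of `uRec ER` leaving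
`V_R`, which does not exist. -/

theorem eq_of_subset_of_degE_eq {E E' : Edges} {S : Finset ℕ} (hsub : E ⊆ E')
    (hmeets : ∀ e ∈ E', ∃ v ∈ e, v ∈ S) (hdeg : ∀ i ∈ S, degE E' i = degE E i) : E' = E := by
  refine Finset.Subset.antisymm (fun e he => ?_) hsub
  obtain ⟨v, hve, hvS⟩ := hmeets e he
  have hfilter : E.filter (v ∈ ·) = E'.filter (v ∈ ·) :=
    Finset.eq_of_subset_of_card_le (Finset.filter_subset_filter _ hsub) (hdeg v hvS).le
  have he' : e ∈ E.filter (v ∈ ·) := hfilter ▸ Finset.mem_filter.mpr ⟨he, hve⟩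
  exact (Finset.mem_filter.mp he').1

theorem mem_of_mem_uRec {VR : Finset ℕ} {ER : Finset (ℕ × ℕ)}
    (hER : ∀ p ∈ ER, p.1 ∈ VR ∧ p.2 ∈ VR) {e : Sym2 ℕ} (he : e ∈ uRec ER) {v : ℕ}
    (hv : v ∈ e) : v ∈ VR := by
  obtain ⟨p, hp, rfl⟩ := Finset.mem_image.mp he
  rcases Sym2.mem_iff.mp hv with rfl | rfl
  exacts [(hER p hp).1, (hER p hp).2]

namespace Compat

variable {VR : Finset ℕ} {ER : Finset (ℕ × ℕ)} {d : ℕ → ℕ} {ZR : ℕ → Bool}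
  {VSU : Finset ℕ} {ESU : Edges} {Z : ℕ → Bool}

theorem uRec_subset (hc : Compat VR ER d ZR VSU ESU Z) : uRec ER ⊆ ESU := by
  intro e he
  obtain ⟨p, hp, rfl⟩ := Finset.mem_image.mp he
  exact hc.er_subset p hp

theorem edges_eq_uRec (hc : Compat VR ER d ZR VSU ESU Z) (hd : ∀ i ∈ VR, d i = dRec ER i) :
    ESU = uRec ER :=
  eq_of_subset_of_degE_eq hc.uRec_subset hc.no_unsampled_edge
    fun i hi => (hc.degree_eq i hi).trans (hd i hi)

theorem vertices_eq (hc : Compat VR ER d ZR VSU ESU Z) (hinside : ∀ e ∈ ESU, ∀ v ∈ e, v ∈ VR) :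
    VSU = VR := by
  refine Finset.Subset.antisymm (fun u hu => ?_) hc.vr_subset
  by_contra huR
  obtain ⟨v, -, huv⟩ := hc.covered u hu huR
  exact huR (hinside _ huv u (Sym2.mem_mk_left u v))

theorem eq_observed (hc : Compat VR ER d ZR VSU ESU Z)
    (hER : ∀ p ∈ ER, p.1 ∈ VR ∧ p.2 ∈ VR) (hd : ∀ i ∈ VR, d i = dRec ER i) :
    VSU = VR ∧ ESU = uRec ER ∧ ∀ v ∈ VSU, Z v = ZR v := by
  have hE := hc.edges_eq_uRec hd
  have hV := hc.vertices_eq fun e he v hv => mem_of_mem_uRec hER (hE ▸ he) hv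
  exact ⟨hV, hE, fun v hv => hc.trait_agree v (hV ▸ hv)⟩

end Compat

/-- If `d_i = d_i^r` for every `i ∈ V_R` then the compatible pair is
unique: every compatible pair has `V_SU = V_R`, edge set equal to that of the undirected
graph underlying `G_R`, and traits equal to `Z_R` on `V_SU`. Consequently any function of
compatible pairs (depending on traits only through their restriction to `V_SU`) — in
particular the subgraph homophily and the subgraph preferential recruitment, when defined —
takes the same value on all compatible pairs, i.e. is point identified. -/
theorem point_identification_when_no_unused_degree
    (VR : Finset ℕ) (ER : Finset (ℕ × ℕ)) (d : ℕ → ℕ) (ZR : ℕ → Bool)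
    (hER : ∀ p ∈ ER, p.1 ∈ VR ∧ p.2 ∈ VR ∧ p.1 ≠ p.2)
    (hd : ∀ i ∈ VR, d i = dRec ER i) :
    -- uniqueness of the compatible pair
    (∀ (VSU : Finset ℕ) (ESU : Edges) (Z : ℕ → Bool),
      Compat VR ER d ZR VSU ESU Z →
        VSU = VR ∧ ESU = uRec ER ∧ ∀ v ∈ VSU, Z v = ZR v) ∧
    -- point identification of any function of compatible pairs
    (∀ f : Finset ℕ → Edges → (ℕ → Bool) → ℝ,
      (∀ (VSU : Finset ℕ) (ESU : Edges) (Z Z' : ℕ → Bool),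
        (∀ v ∈ VSU, Z v = Z' v) → f VSU ESU Z = f VSU ESU Z') →
      ∀ (VSU₁ : Finset ℕ) (ESU₁ : Edges) (Z₁ : ℕ → Bool)
        (VSU₂ : Finset ℕ) (ESU₂ : Edges) (Z₂ : ℕ → Bool),
        Compat VR ER d ZR VSU₁ ESU₁ Z₁ → Compat VR ER d ZR VSU₂ ESU₂ Z₂ →
        f VSU₁ ESU₁ Z₁ = f VSU₂ ESU₂ Z₂) := by
  have unique : ∀ (VSU : Finset ℕ) (ESU : Edges) (Z : ℕ → Bool),
      Compat VR ER d ZR VSU ESU Z → VSU = VR ∧ ESU = uRec ER ∧ ∀ v ∈ VSU, Z v = ZR v :=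
    fun _ _ _ hc => hc.eq_observed (fun p hp => ⟨(hER p hp).1, (hER p hp).2.1⟩) hd
  refine ⟨unique, fun f hf VSU₁ ESU₁ Z₁ VSU₂ ESU₂ Z₂ h₁ h₂ => ?_⟩
  obtain ⟨rfl, rfl, hZ₁⟩ := unique _ _ _ h₁
  obtain ⟨rfl, rfl, hZ₂⟩ := unique _ _ _ h₂
  rw [hf _ _ _ _ hZ₁, hf _ _ _ _ hZ₂]

end RDS
end

section
/- Let (G_SU, Z_SU) be a pair compatible with the observed data, and let {i,j} ∈ E_SU be an edge with i ∈ V_R such that neither (i,j) nor (j,i) lies in E_R. Construct (G*, Z*) as follows: delete the edge {i,j}; add a new vertex u₁ ∉ V_SU adjacent only to i and assign it any trait z₁ ∈ {0,1}; if j ∈ V_R, also add a new vertex u₂ ∉ V_SU ∪ {u₁} adjacent only to j with any trait z₂ ∈ {0,1}; if j ∈ U and j is left with no neighbor in V_R, delete j (and its trait). Then (G*, Z*) is compatible with the observed data (G_R, d_R, Z_R). -/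
open Finset

namespace RDS

/-!
Replacing `{i, j}` by pendant edges to fresh unsampled vertices keeps every sampled degree:
`i` loses `j` and gains `u₁`, and a sampled `j` loses `i` and gains `u₂`. The edge is not a
recruitment edge, so the recruitment graph survives, and the only vertex that can lose its
last sampled neighbour is an unsampled `j`, which is then deleted.
-/

lemma degE_insert {E : Edges} {e : Sym2 ℕ} (h : e ∉ E) (v : ℕ) :
    degE (insert e E) v = degE E v + if v ∈ e then 1 else 0 := by
  simp only [degE, card_filter, sum_insert h, add_comm]

lemma degE_erase_add {E : Edges} {e : Sym2 ℕ} (h : e ∈ E) (v : ℕ) :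
    degE (E.erase e) v + (if v ∈ e then 1 else 0) = degE E v := by
  simp only [degE, card_filter]
  exact sum_erase_add _ _ h

lemma mk_ne_mk_of_left_ne {a b i j : ℕ} (hi : a ≠ i) (hj : a ≠ j) : s(a, b) ≠ s(i, j) := by
  intro h
  rcases Sym2.mem_iff.mp (h ▸ Sym2.mem_mk_left a b) with rfl | rfl <;> contradiction

lemma mk_ne_mk_of_notMem {ER : Finset (ℕ × ℕ)} {p : ℕ × ℕ} {i j : ℕ} (hp : p ∈ ER)
    (hij : (i, j) ∉ ER) (hji : (j, i) ∉ ER) : s(p.1, p.2) ≠ s(i, j) := by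
  intro h
  rcases (Sym2.mk_eq_mk_iff (q := (i, j))).mp h with rfl | rfl
  exacts [hij hp, hji hp]

namespace Compat

variable {VR : Finset ℕ} {ER : Finset (ℕ × ℕ)} {d : ℕ → ℕ} {ZR : ℕ → Bool}
  {V : Finset ℕ} {E : Edges} {Z : ℕ → Bool}

lemma congr_degree {d' : ℕ → ℕ} (hc : Compat VR ER d ZR V E Z) (h : ∀ v ∈ VR, d v = d' v) :
    Compat VR ER d' ZR V E Z :=
  { hc with degree_eq := fun v hv => (hc.degree_eq v hv).trans (h v hv) }

lemma insert_pendant (hc : Compat VR ER d ZR V E Z) {i u : ℕ} (hi : i ∈ VR) (hu : u ∉ V)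
    (z : Bool) :
    Compat VR ER (fun v => d v + if v = i then 1 else 0) ZR
      (insert u V) (insert s(i, u) E) (Function.update Z u z) := by
  have hui : u ≠ i := ne_of_mem_of_not_mem (hc.vr_subset hi) hu |>.symm
  have huR : u ∉ VR := fun h => hu (hc.vr_subset h)
  have hnew : s(i, u) ∉ E := fun h => hu (hc.edges_subset _ h u (Sym2.mem_mk_right i u))
  refine ⟨(forall_mem_insert _ _ _).mpr ⟨Sym2.mk_isDiag_iff.not.mpr hui.symm, hc.loopless⟩,
    hc.vr_subset.trans (subset_insert _ _), (forall_mem_insert _ _ _).mpr ⟨?_, ?_⟩,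
    fun p hp => mem_insert_of_mem (hc.er_subset p hp), ?_, ?_,
    (forall_mem_insert _ _ _).mpr ⟨⟨i, Sym2.mem_mk_left i u, hi⟩, hc.no_unsampled_edge⟩, ?_⟩
  · intro v hv
    rcases Sym2.mem_iff.mp hv with rfl | rfl
    exacts [mem_insert_of_mem (hc.vr_subset hi), mem_insert_self v V]
  · exact fun e he v hv => mem_insert_of_mem (hc.edges_subset e he v hv)
  · intro v hv
    rw [Function.update_of_ne (ne_of_mem_of_not_mem hv huR)]
    exact hc.trait_agree v hv
  · refine (forall_mem_insert _ _ _).mpr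
      ⟨fun _ => ⟨i, hi, mem_insert.mpr (Or.inl Sym2.eq_swap)⟩, fun w hw hwR => ?_⟩
    obtain ⟨v, hv, hwv⟩ := hc.covered w hw hwR
    exact ⟨v, hv, mem_insert_of_mem hwv⟩
  · intro v hv
    have hvu : v ≠ u := ne_of_mem_of_not_mem hv huR
    simp only [degE_insert hnew, hc.degree_eq v hv, Sym2.mem_iff, hvu, or_false]

variable {i j : ℕ}

lemma erase_edge (hc : Compat VR ER d ZR V E Z) (hi : i ∈ VR)
    (hij : (i, j) ∉ ER) (hji : (j, i) ∉ ER)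
    (hcov : j ∈ VR ∨ ((VR.erase i).filter (fun v => s(v, j) ∈ E)).Nonempty) :
    Compat VR ER (degE (E.erase s(i, j))) ZR V (E.erase s(i, j)) Z := by
  refine ⟨fun e he => hc.loopless e (mem_of_mem_erase he), hc.vr_subset,
    fun e he => hc.edges_subset e (mem_of_mem_erase he),
    fun p hp => mem_erase.mpr ⟨mk_ne_mk_of_notMem hp hij hji, hc.er_subset p hp⟩,
    hc.trait_agree, ?_, fun e he => hc.no_unsampled_edge e (mem_of_mem_erase he),
    fun _ _ => rfl⟩
  intro u hu huR
  have hui : u ≠ i := ne_of_mem_of_not_mem hi huR |>.symm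
  by_cases huj : u = j
  · subst huj
    obtain ⟨w, hw⟩ := hcov.resolve_left huR
    obtain ⟨hwi, hwR⟩ := mem_erase.mp (mem_filter.mp hw).1
    refine ⟨w, hwR, mem_erase.mpr ⟨?_, ?_⟩⟩ <;> rw [Sym2.eq_swap]
    · exact mk_ne_mk_of_left_ne hwi (ne_of_mem_of_not_mem hwR huR)
    · exact (mem_filter.mp hw).2
  · obtain ⟨v, hv, huv⟩ := hc.covered u hu huR
    exact ⟨v, hv, mem_erase.mpr ⟨mk_ne_mk_of_left_ne hui huj, huv⟩⟩

lemma erase_edge_of_isolated (hc : Compat VR ER d ZR V E Z) (hi : i ∈ VR)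
    (hij : (i, j) ∉ ER) (hji : (j, i) ∉ ER) (hj : j ∉ VR)
    (hiso : ¬ ((VR.erase i).filter (fun v => s(v, j) ∈ E)).Nonempty) :
    Compat VR ER (degE (E.erase s(i, j))) ZR (V.erase j) (E.erase s(i, j)) Z := by
  refine ⟨fun e he => hc.loopless e (mem_of_mem_erase he),
    fun v hv => mem_erase.mpr ⟨ne_of_mem_of_not_mem hv hj, hc.vr_subset hv⟩, ?_,
    fun p hp => mem_erase.mpr ⟨mk_ne_mk_of_notMem hp hij hji, hc.er_subset p hp⟩,
    hc.trait_agree, ?_, fun e he => hc.no_unsampled_edge e (mem_of_mem_erase he),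
    fun _ _ => rfl⟩
  · intro e he v hv
    obtain ⟨hne, heE⟩ := mem_erase.mp he
    refine mem_erase.mpr ⟨?_, hc.edges_subset e heE v hv⟩
    rintro rfl
    obtain ⟨w, hwe, hwR⟩ := hc.no_unsampled_edge e heE
    have hew : e = s(v, w) :=
      (Sym2.mem_and_mem_iff (ne_of_mem_of_not_mem hwR hj).symm).mp ⟨hv, hwe⟩
    subst hew
    have hwi : w ≠ i := by
      rintro rfl
      exact hne Sym2.eq_swap
    exact hiso ⟨w, mem_filter.mpr ⟨mem_erase.mpr ⟨hwi, hwR⟩, Sym2.eq_swap ▸ heE⟩⟩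
  · intro u hu huR
    obtain ⟨huj, hu⟩ := mem_erase.mp hu
    obtain ⟨v, hv, huv⟩ := hc.covered u hu huR
    exact ⟨v, hv, mem_erase.mpr ⟨mk_ne_mk_of_left_ne (ne_of_mem_of_not_mem hi huR).symm huj, huv⟩⟩

end Compat

theorem delete_edge_add_pendants_compatible_general
    (VR : Finset ℕ) (ER : Finset (ℕ × ℕ)) (d : ℕ → ℕ) (ZR : ℕ → Bool)
    (VSU : Finset ℕ) (ESU : Edges) (Z : ℕ → Bool)
    (hc : Compat VR ER d ZR VSU ESU Z)
    (i j u₁ u₂ : ℕ) (z₁ z₂ : Bool)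
    (hi : i ∈ VR) (he : s(i, j) ∈ ESU)
    (hij1 : (i, j) ∉ ER) (hij2 : (j, i) ∉ ER)
    (hu₁ : u₁ ∉ VSU) (hu₂ : u₂ ∉ VSU) (huu : u₁ ≠ u₂) :
    Compat VR ER d ZR
      -- V_SU*
      (if j ∈ VR then
        insert u₂ (insert u₁ VSU)
      else if ((VR.erase i).filter (fun v => s(v, j) ∈ ESU)).Nonempty then
        insert u₁ VSU
      else
        insert u₁ (VSU.erase j))
      -- E_SU*
      (if j ∈ VR then
        insert s(i, u₁) (insert s(j, u₂) (ESU.erase s(i, j)))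
      else
        insert s(i, u₁) (ESU.erase s(i, j)))
      -- Z*
      (if j ∈ VR then
        Function.update (Function.update Z u₁ z₁) u₂ z₂
      else
        Function.update Z u₁ z₁) := by
  have hij : i ≠ j := fun h => hc.loopless _ he (Sym2.mk_isDiag_iff.mpr h)
  have hdeg (v : ℕ) : degE (ESU.erase s(i, j)) v + (if v = i then 1 else 0)
      + (if v = j then 1 else 0) = degE ESU v := by
    rw [← degE_erase_add he v]
    by_cases hvi : v = i <;> by_cases hvj : v = j <;> simp_all
  by_cases hj : j ∈ VR
  · simp only [if_pos hj]
    have hu₂' : u₂ ∉ insert u₁ VSU := by simp [hu₂, huu.symm]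
    rw [insert_comm s(i, u₁)]
    refine (((hc.erase_edge hi hij1 hij2 (Or.inl hj)).insert_pendant hi hu₁ z₁).insert_pendant
      hj hu₂' z₂).congr_degree fun v hv => ?_
    rw [hdeg, hc.degree_eq v hv]
  have hdeg' (v : ℕ) (hv : v ∈ VR) :
      degE (ESU.erase s(i, j)) v + (if v = i then 1 else 0) = d v := by
    simpa [ne_of_mem_of_not_mem hv hj, hc.degree_eq v hv] using hdeg v
  simp only [if_neg hj]
  by_cases hcov : ((VR.erase i).filter (fun v => s(v, j) ∈ ESU)).Nonempty
  · simp only [if_pos hcov]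
    exact ((hc.erase_edge hi hij1 hij2 (Or.inr hcov)).insert_pendant hi hu₁ z₁).congr_degree hdeg'
  · simp only [if_neg hcov]
    exact ((hc.erase_edge_of_isolated hi hij1 hij2 hj hcov).insert_pendant hi
      (fun h => hu₁ (mem_of_mem_erase h)) z₁).congr_degree hdeg'

/-- Deleting a non-recruitment edge `{i,j}` (with `i ∈ V_R`) from a
compatible pair and replacing it by pendant edges — a new vertex `u₁` adjacent only to `i`
with any trait `z₁`; if `j ∈ V_R`, also a new vertex `u₂` adjacent only to `j` with any
trait `z₂`; and, if `j` is unsampled and left with no neighbor in `V_R`, deleting `j` —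
yields another pair compatible with the observed data. -/
theorem delete_edge_add_pendants_compatible
    (VR : Finset ℕ) (ER : Finset (ℕ × ℕ)) (d : ℕ → ℕ) (ZR : ℕ → Bool)
    (VSU : Finset ℕ) (ESU : Edges) (Z : ℕ → Bool)
    (hER : ∀ p ∈ ER, p.1 ∈ VR ∧ p.2 ∈ VR)
    (hc : Compat VR ER d ZR VSU ESU Z)
    (i j u₁ u₂ : ℕ) (z₁ z₂ : Bool)
    (hi : i ∈ VR) (he : s(i, j) ∈ ESU)
    (hij1 : (i, j) ∉ ER) (hij2 : (j, i) ∉ ER)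
    (hu₁ : u₁ ∉ VSU) (hu₂ : u₂ ∉ VSU) (huu : u₁ ≠ u₂) :
    Compat VR ER d ZR
      -- V_SU*
      (if j ∈ VR then
        insert u₂ (insert u₁ VSU)
      else if ((VR.erase i).filter (fun v => s(v, j) ∈ ESU)).Nonempty then
        insert u₁ VSU
      else
        insert u₁ (VSU.erase j))
      -- E_SU*
      (if j ∈ VR then
        insert s(i, u₁) (insert s(j, u₂) (ESU.erase s(i, j)))
      else
        insert s(i, u₁) (ESU.erase s(i, j)))
      -- Z*
      (if j ∈ VR then
        Function.update (Function.update Z u₁ z₁) u₂ z₂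
      else
        Function.update Z u₁ z₁) :=
  delete_edge_add_pendants_compatible_general VR ER d ZR VSU ESU Z hc i j u₁ u₂ z₁ z₂ hi he hij1
    hij2 hu₁ hu₂ huu

end RDS
end
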